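/- arXiv:2307.11252 — 6 statements merged into one kernel-verified Lean document; each statement's English description precedes it below -/
import Mathlib

section
/- If a plan P of n agents admits a non-colliding delay-introduction (some delays added to each path making the plan non-colliding), then it admits one where the total number of introduced delays is at most (n-1)·‖P‖, where ‖P‖ is the sum of path lengths in P. -/
variable {V : Type*}

/-- The (padded) position of a path at time `t`: after the path ends the agent
stays at its final vertex. -/
def padPos [Inhabited V] (π : List V) (t : ℕ) : V :=
  π.getD (min t (π.length - 1)) default

/-- Two (padded) paths are non-colliding: at every time step they occupy distinct
vertices and they never swap along an edge. -/
def NonColliding [Inhabited V] (π₁ π₂ : List V) : Prop :=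
  (∀ t, padPos π₁ t ≠ padPos π₂ t) ∧
  ∀ t, (padPos π₁ t, padPos π₁ (t + 1)) ≠ (padPos π₂ (t + 1), padPos π₂ t)

/-- The path obtained from `π` by repeating its `j`-th vertex an additional `ks[j]` times. -/
def delayPath (π : List V) (ks : List ℕ) : List V :=
  (List.zipWith (fun v k => List.replicate (k + 1) v) π ks).flatten

/-- `π'` is a `d`-delay of `π`. -/
def IsDelay (d : ℕ) (π π' : List V) : Prop :=
  ∃ ks : List ℕ, ks.length = π.length ∧ ks.sum = d ∧ π' = delayPath π ks

lemma delayPath_cons (v : V) (π : List V) (k : ℕ) (ks : List ℕ) :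
    delayPath (v :: π) (k :: ks) = List.replicate (k + 1) v ++ delayPath π ks := by
  simp [delayPath]

lemma delayPath_length : ∀ (π : List V) (ks : List ℕ), ks.length = π.length →
    (delayPath π ks).length = π.length + ks.sum := by
  intro π
  induction π with
  | nil => intro ks h; simp only [List.length_nil, List.length_eq_zero_iff] at h; subst h; simp [delayPath]
  | cons v π ih =>
    intro ks h
    cases ks with
    | nil => simp at h
    | cons k ks =>
      simp only [List.length_cons, Nat.add_right_cancel_iff] at h
      rw [delayPath_cons, List.length_append, ih ks h]
      simp; omega

/-- The starting indices of the blocks in `delayPath π ks`. -/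
def blockStarts : List V → List ℕ → List ℕ
  | [], _ => []
  | _ :: _, [] => []
  | _ :: π, k :: ks => 0 :: (blockStarts π ks).map (· + (k + 1))

lemma blockStarts_length : ∀ (π : List V) (ks : List ℕ), ks.length = π.length →
    (blockStarts π ks).length = π.length := by
  intro π
  induction π with
  | nil => intro ks h; simp [blockStarts]
  | cons v π ih =>
    intro ks h
    cases ks with
    | nil => simp at h
    | cons k ks =>
      simp only [List.length_cons, Nat.add_right_cancel_iff] at h
      simp [blockStarts, ih ks h]

/-- Deleting a non-block-start index from a delayed path yields a delayed path
with one less total delay; moreover the deleted entry equals its predecessor. -/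
lemma erase_delay [Inhabited V] : ∀ (π : List V) (ks : List ℕ) (t : ℕ),
    ks.length = π.length → t < (delayPath π ks).length → t ∉ blockStarts π ks →
    (∃ ks' : List ℕ, ks'.length = π.length ∧ ks'.sum + 1 = ks.sum ∧
      (delayPath π ks).eraseIdx t = delayPath π ks') ∧
    (delayPath π ks).getD t default = (delayPath π ks).getD (t - 1) default := by
  intro π
  induction π with
  | nil =>
    intro ks t hlen ht hb
    simp only [List.length_nil, List.length_eq_zero_iff] at hlen; subst hlen
    simp [delayPath] at ht
  | cons v π ih =>
    intro ks t hlen ht hb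
    cases ks with
    | nil => simp at hlen
    | cons k ks =>
      simp only [List.length_cons, Nat.add_right_cancel_iff] at hlen
      rw [delayPath_cons] at ht ⊢
      simp only [blockStarts, List.mem_cons, List.mem_map, not_or, not_exists] at hb
      obtain ⟨ht0, hbm⟩ := hb
      have hrep : (List.replicate (k + 1) v).length = k + 1 := by simp
      by_cases hcase : t < k + 1
      · -- within the first block
        have hk : 1 ≤ k := by omega
        have ht1 : 1 ≤ t := by omega
        constructor
        · refine ⟨(k - 1) :: ks, by simpa using hlen, ?_, ?_⟩
          · simp [List.sum_cons]; omega
          · rw [List.eraseIdx_append_of_lt_length (by simpa using hcase),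
              List.eraseIdx_replicate, if_pos hcase, delayPath_cons]
            congr 2
            omega
        · rw [List.getD_append _ _ _ _ (by omega), List.getD_append _ _ _ _ (by omega)]
          rw [List.getD_eq_getElem _ _ (by simpa using hcase),
            List.getD_eq_getElem _ _ (by simp; omega)]
          simp
      · -- in a later block
        push_neg at hcase
        set t' := t - (k + 1) with ht'def
        have htlen : t' < (delayPath π ks).length := by
          rw [List.length_append, hrep] at ht; omega
        have hb' : t' ∉ blockStarts π ks := by
          intro hmem
          exact hbm t' ⟨hmem, by omega⟩
        obtain ⟨⟨ks', h1, h2, h3⟩, h4⟩ := ih ks t' hlen htlen hb'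
        have ht'1 : 1 ≤ t' := by
          rcases Nat.eq_zero_or_pos t' with h0 | h; swap
          · exact h
          exfalso
          have hπ : π ≠ [] := by
            intro he; subst he
            simp [delayPath] at htlen
          have hks : ks ≠ [] := by
            intro he; subst he
            exact hπ (List.length_eq_zero_iff.mp (by simpa using hlen.symm))
          obtain ⟨w, π₀, rfl⟩ := List.exists_cons_of_ne_nil hπ
          obtain ⟨k₂, ks₀, rfl⟩ := List.exists_cons_of_ne_nil hks
          exact hb' (by rw [h0]; simp [blockStarts])
        constructor
        · refine ⟨k :: ks', by simpa using h1, ?_, ?_⟩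
          · simp [List.sum_cons]; omega
          · rw [List.eraseIdx_append_of_length_le (by omega), delayPath_cons, hrep]
            rw [← ht'def, h3]
        · rw [List.getD_append_right _ _ _ _ (by omega),
            List.getD_append_right _ _ _ _ (by omega), hrep]
          have e1 : t - (k + 1) = t' := rfl
          have e2 : t - 1 - (k + 1) = t' - 1 := by omega
          rw [e1, e2]
          exact h4

lemma padPos_stable [Inhabited V] (π : List V) (s : ℕ) (h : π.length - 1 ≤ s) :
    padPos π (s + 1) = padPos π s := by
  unfold padPos
  rw [min_eq_right (by omega), min_eq_right (by omega)]

lemma padPos_eraseIdx [Inhabited V] (π' : List V) (t : ℕ) (h1 : 1 ≤ t)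
    (h2 : t < π'.length)
    (hval : π'.getD t default = π'.getD (t - 1) default) (s : ℕ) :
    padPos (π'.eraseIdx t) s = padPos π' (if s < t then s else s + 1) := by
  have hL : 2 ≤ π'.length := by omega
  have hQ : (π'.eraseIdx t).length = π'.length - 1 := by
    rw [List.length_eraseIdx, if_pos h2]
  unfold padPos
  rw [hQ]
  by_cases hs : s < t
  · rw [if_pos hs, min_eq_left (by omega), min_eq_left (by omega)]
    rw [List.getD_eq_getElem _ _ (by omega), List.getD_eq_getElem _ _ (by omega),
      List.getElem_eraseIdx]
    rw [dif_pos hs]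
  · rw [if_neg hs]
    push_neg at hs
    by_cases hs2 : s ≤ π'.length - 2
    · rw [min_eq_left (by omega), min_eq_left (by omega)]
      rw [List.getD_eq_getElem _ _ (by omega), List.getD_eq_getElem _ _ (by omega),
        List.getElem_eraseIdx]
      rw [dif_neg (by omega)]
    · push_neg at hs2
      rw [min_eq_right (by omega), min_eq_right (by omega)]
      by_cases hlast : t = π'.length - 1
      · rw [List.getD_eq_getElem _ _ (by omega), List.getD_eq_getElem _ _ (by omega),
          List.getElem_eraseIdx, dif_pos (by omega)]
        rw [List.getD_eq_getElem _ _ (by omega), List.getD_eq_getElem _ _ (by omega)] at hval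
        have e1 : π'.length - 1 - 1 = t - 1 := by omega
        have e2 : t - 1 + 1 = t := by omega
        simp_rw [e1]
        rw [← hval]
        all_goals (congr 1 <;> omega)
      · rw [List.getD_eq_getElem _ _ (by omega), List.getD_eq_getElem _ _ (by omega),
          List.getElem_eraseIdx, dif_neg (by omega)]
        first
        | rfl
        | (congr 1; omega)

lemma zero_mem_blockStarts (v : V) (π : List V) (k : ℕ) (ks : List ℕ) :
    0 ∈ blockStarts (v :: π) (k :: ks) := by simp [blockStarts]

lemma exists_good_col {n : ℕ} (f : Fin n → List ℕ) (L : ℕ)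
    (h : ∑ i, (f i).length < L) : ∃ t < L, ∀ i, t ∉ f i := by
  classical
  set S : Finset ℕ := Finset.univ.biUnion (fun i => (f i).toFinset) with hS
  have hcard : S.card ≤ ∑ i, (f i).length :=
    le_trans Finset.card_biUnion_le
      (Finset.sum_le_sum fun i _ => (f i).toFinset_card_le)
  have hns : ¬ (Finset.range L ⊆ S) := by
    intro hsub
    have := Finset.card_le_card hsub
    rw [Finset.card_range] at this
    omega
  obtain ⟨t, htL, htS⟩ := Finset.not_subset.mp hns
  exact ⟨t, Finset.mem_range.mp htL, fun i hm =>
    htS (Finset.mem_biUnion.mpr ⟨i, Finset.mem_univ i, List.mem_toFinset.mpr hm⟩)⟩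

lemma step_lemma [Inhabited V] {n : ℕ} (P : Fin n → List V) (d : Fin n → ℕ)
    (P' : Fin n → List V) (ks : Fin n → List ℕ)
    (hks1 : ∀ i, (ks i).length = (P i).length)
    (hks2 : ∀ i, (ks i).sum = d i)
    (hks3 : ∀ i, P' i = delayPath (P i) (ks i))
    (hnc : ∀ i j, i ≠ j → NonColliding (P' i) (P' j))
    (hbig : (n - 1) * ∑ i, (P i).length < ∑ i, d i) :
    ∃ (d' : Fin n → ℕ) (P'' : Fin n → List V),
      (∀ i, IsDelay (d' i) (P i) (P'' i)) ∧
      (∀ i j, i ≠ j → NonColliding (P'' i) (P'' j)) ∧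
      ∑ i, d' i < ∑ i, d i := by
  classical
  set S := ∑ i, (P i).length with hSdef
  have hn : 0 < n := by
    rcases Nat.eq_zero_or_pos n with h0 | h; swap
    · exact h
    · subst h0; simp at hbig
  have hlen' : ∀ i, (P' i).length = (P i).length + d i := fun i => by
    rw [hks3 i, delayPath_length _ _ (hks1 i), hks2 i]
  -- there is a long agent
  have hlong : ∃ i0, S < (P' i0).length := by
    by_contra hno
    push_neg at hno
    have hub : ∀ i, d i + (P i).length ≤ S := fun i => by
      have := hno i; rw [hlen' i] at this; omega
    have hsum : ∑ i, (d i + (P i).length) ≤ n * S := by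
      calc ∑ i, (d i + (P i).length) ≤ ∑ _i : Fin n, S :=
            Finset.sum_le_sum (fun i _ => hub i)
        _ = n * S := by simp [Finset.sum_const, mul_comm]
    rw [Finset.sum_add_distrib] at hsum
    have hmul : (n - 1) * S + S = n * S := by
      cases n with
      | zero => omega
      | succ m => simp only [Nat.succ_sub_one]; ring
    omega
  obtain ⟨i0, hi0⟩ := hlong
  -- find a good column t
  have hbs_len : ∑ i, (blockStarts (P i) (ks i)).length = S := by
    apply Finset.sum_congr rfl
    intro i _
    exact blockStarts_length _ _ (hks1 i)
  obtain ⟨t, htL, hgood⟩ :=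
    exists_good_col (fun i => blockStarts (P i) (ks i)) ((P' i0).length)
      (by rw [hbs_len]; exact hi0)
  -- t ≥ 1
  have hP0ne : P i0 ≠ [] := by
    intro he
    have h0 : (ks i0).length = 0 := by rw [hks1 i0, he]; simp
    rw [List.length_eq_zero_iff] at h0
    rw [hks3 i0, he, h0] at htL
    simp [delayPath] at htL
  have ht1 : 1 ≤ t := by
    rcases Nat.eq_zero_or_pos t with h0 | h; swap
    · exact h
    exfalso
    have hksne : ks i0 ≠ [] := by
      intro he
      have := hks1 i0; rw [he] at this
      exact hP0ne (List.length_eq_zero_iff.mp this.symm)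
    obtain ⟨v, π₀, hcons⟩ := List.exists_cons_of_ne_nil hP0ne
    obtain ⟨k₂, ks₀, hcons2⟩ := List.exists_cons_of_ne_nil hksne
    apply hgood i0
    rw [hcons, hcons2, h0]
    exact zero_mem_blockStarts _ _ _ _
  -- the new plan
  set Q : Fin n → List V := fun i =>
    if t < (P' i).length then (P' i).eraseIdx t else P' i with hQdef
  set d' : Fin n → ℕ := fun i =>
    if t < (P' i).length then d i - 1 else d i with hd'def
  have key : ∀ i, IsDelay (d' i) (P i) (Q i) ∧
      (∀ s, padPos (Q i) s = padPos (P' i) (if s < t then s else s + 1)) ∧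
      padPos (P' i) t = padPos (P' i) (t - 1) ∧
      d' i ≤ d i ∧ (t < (P' i).length → d' i < d i) := by
    intro i
    by_cases hti : t < (P' i).length
    · -- touched agent
      have htd : t < (delayPath (P i) (ks i)).length := by rw [← hks3 i]; exact hti
      obtain ⟨⟨ks', e1, e2, e3⟩, hval⟩ := erase_delay (P i) (ks i) t (hks1 i) htd (hgood i)
      rw [← hks3 i] at e3 hval
      have hdi : 1 ≤ d i := by rw [← hks2 i]; omega
      have hQi : Q i = (P' i).eraseIdx t := by rw [hQdef]; simp [hti]
      have hd'i : d' i = d i - 1 := by rw [hd'def]; simp [hti]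
      have hvalpad : padPos (P' i) t = padPos (P' i) (t - 1) := by
        unfold padPos
        rw [min_eq_left (by omega), min_eq_left (by omega)]
        exact hval
      refine ⟨⟨ks', e1, by rw [hd'i, ← hks2 i]; omega, by rw [hQi, e3]⟩, ?_, hvalpad, by omega, fun _ => by omega⟩
      intro s
      rw [hQi]
      exact padPos_eraseIdx (P' i) t ht1 hti hval s
    · -- untouched agent
      push_neg at hti
      have hQi : Q i = P' i := by rw [hQdef]; simp [Nat.not_lt.mpr hti]
      have hd'i : d' i = d i := by rw [hd'def]; simp [Nat.not_lt.mpr hti]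
      have hstab : ∀ s, (P' i).length - 1 ≤ s → padPos (P' i) (s + 1) = padPos (P' i) s :=
        fun s hs => padPos_stable _ _ hs
      refine ⟨?_, ?_, ?_, by omega, fun hc => absurd hc (by omega)⟩
      · rw [hQi, hd'i]; exact ⟨ks i, hks1 i, hks2 i, hks3 i⟩
      · intro s
        rw [hQi]
        by_cases hs : s < t
        · rw [if_pos hs]
        · rw [if_neg hs]
          push_neg at hs
          exact (hstab s (by omega)).symm
      · have := hstab (t - 1) (by omega)
        rw [show t - 1 + 1 = t by omega] at this
        exact this
  refine ⟨d', Q, fun i => (key i).1, ?_, ?_⟩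
  · -- non-colliding
    intro i j hij
    obtain ⟨hnc1, hnc2⟩ := hnc i j hij
    constructor
    · intro s
      rw [(key i).2.1 s, (key j).2.1 s]
      exact hnc1 _
    · intro s
      by_cases c1 : s + 1 < t
      · rw [(key i).2.1 s, (key i).2.1 (s + 1), (key j).2.1 (s + 1), (key j).2.1 s,
          if_pos (by omega), if_pos c1]
        exact hnc2 s
      · by_cases c2 : s < t
        · -- s = t - 1
          rw [(key i).2.1 s, (key i).2.1 (s + 1), (key j).2.1 (s + 1), (key j).2.1 s,
            if_pos c2, if_neg (by omega)]
          have hsi : padPos (P' i) s = padPos (P' i) t := by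
            rw [show s = t - 1 by omega]; exact ((key i).2.2.1).symm
          have hsj : padPos (P' j) s = padPos (P' j) t := by
            rw [show s = t - 1 by omega]; exact ((key j).2.2.1).symm
          rw [hsi, hsj, show s + 1 + 1 = t + 1 by omega]
          exact hnc2 t
        · rw [(key i).2.1 s, (key i).2.1 (s + 1), (key j).2.1 (s + 1), (key j).2.1 s,
            if_neg c2, if_neg (by omega)]
          exact hnc2 (s + 1)
  · -- sum decreases
    apply Finset.sum_lt_sum
    · exact fun i _ => (key i).2.2.2.1
    · exact ⟨i0, Finset.mem_univ i0, (key i0).2.2.2.2 (by omega)⟩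

/-- If a plan `P` of `n` agents admits a non-colliding delay-introduction, then it
admits one with total number of introduced delays at most `(n-1) * ‖P‖`. -/
theorem acid_quadratic_upper_bound [Inhabited V] {n : ℕ} (P : Fin n → List V)
    (h : ∃ (d : Fin n → ℕ) (P' : Fin n → List V),
      (∀ i, IsDelay (d i) (P i) (P' i)) ∧
      ∀ i j, i ≠ j → NonColliding (P' i) (P' j)) :
    ∃ (d : Fin n → ℕ) (P' : Fin n → List V),
      (∀ i, IsDelay (d i) (P i) (P' i)) ∧
      (∀ i j, i ≠ j → NonColliding (P' i) (P' j)) ∧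
      (∑ i, d i) ≤ (n - 1) * ∑ i, (P i).length := by
  obtain ⟨d, P', h1, h2⟩ := h
  have main : ∀ D (d : Fin n → ℕ) (P' : Fin n → List V), ∑ i, d i = D →
      (∀ i, IsDelay (d i) (P i) (P' i)) →
      (∀ i j, i ≠ j → NonColliding (P' i) (P' j)) →
      ∃ (d' : Fin n → ℕ) (P'' : Fin n → List V),
        (∀ i, IsDelay (d' i) (P i) (P'' i)) ∧
        (∀ i j, i ≠ j → NonColliding (P'' i) (P'' j)) ∧
        (∑ i, d' i) ≤ (n - 1) * ∑ i, (P i).length := by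
    intro D
    induction D using Nat.strong_induction_on with
    | _ D ih =>
      intro d P' hD h1 h2
      by_cases hle : ∑ i, d i ≤ (n - 1) * ∑ i, (P i).length
      · exact ⟨d, P', h1, h2, hle⟩
      · push_neg at hle
        choose ks hk1 hk2 hk3 using h1
        obtain ⟨d', P'', g1, g2, g3⟩ := step_lemma P d P' ks hk1 hk2 hk3 h2 hle
        exact ih (∑ i, d' i) (by omega) d' P'' rfl g1 g2
  exact main _ d P' rfl h1 h2
end

section
/- In the hardness reduction from Minimum Sum Coloring: given an undirected graph G = (V,E) with a proper coloring χ : V → ℕ (adjacent vertices receive distinct colors), the plan in which each agent i waits χ(i) time steps at its private start vertex and then traverses its path through all C+1 blocks without further delay is non-colliding, provided the paths of agents i and j intersect exactly at the block-vertices corresponding to edges {i,j} of G and any shared vertex appears at the same index along both agents' paths. -/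
variable {V : Type*}

/-- Hardness-reduction soundness: given a proper coloring `χ` of `G`, the plan in
which agent `i` waits `χ i` steps at its private start and then follows its path
`π i` (so at time `τ` it occupies `π i (τ - χ i)`, with truncated subtraction
modeling the initial wait) is non-colliding, provided any vertex shared by two
agents' paths corresponds to an edge of `G` and occurs at the same (positive)
index along both paths. -/
theorem reduction_coloring_noncolliding {n : ℕ} (G : SimpleGraph (Fin n))
    (χ : Fin n → ℕ) (hχ : ∀ i j, G.Adj i j → χ i ≠ χ j)
    (π : Fin n → ℕ → V)
    (hshare : ∀ i j t s, i ≠ j → π i t = π j s → t = s ∧ 1 ≤ t ∧ G.Adj i j) :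
    ∀ i j, i ≠ j →
      (∀ τ, π i (τ - χ i) ≠ π j (τ - χ j)) ∧
      (∀ τ, (π i (τ - χ i), π i (τ + 1 - χ i)) ≠
            (π j (τ + 1 - χ j), π j (τ - χ j))) := by
  intro i j hij
  constructor
  · intro τ h
    obtain ⟨heq, h1, hadj⟩ := hshare i j _ _ hij h
    exact hχ i j hadj (by omega)
  · intro τ h
    have h1 := congrArg Prod.fst h
    have h2 := congrArg Prod.snd h
    simp only at h1 h2
    obtain ⟨e1, g1, hadj⟩ := hshare i j _ _ hij h1
    obtain ⟨e2, g2, _⟩ := hshare i j _ _ hij h2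
    exact hχ i j hadj (by omega)
end

section
/- In the hardness reduction: if in some block B_ℓ no agent is delayed and the plan restricted to B_ℓ is non-colliding, then for each edge {i,j} of G the total accumulated delays of agents i and j before block B_ℓ are different; consequently the map sending vertex i to agent i's accumulated delay before B_ℓ is a proper coloring of G. -/
variable {V : Type*}

/-- Hardness reduction, converse direction: suppose in block `B ℓ` the agents move
undelayed along synchronized paths `p i` (the shared vertex of agents `i, j` with
`{i,j} ∈ E(G)` occurring at a common index), each agent `i` entering with
accumulated delay `d i`, so agent `i` occupies `p i (τ - d i)` at time `τ`.
If the block is non-colliding, then `d` is a proper coloring of `G`. -/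
theorem undelayed_block_gives_coloring {n : ℕ} (G : SimpleGraph (Fin n))
    (p : Fin n → ℕ → V) (d : Fin n → ℕ)
    (hshared : ∀ i j, G.Adj i j → ∃ t, p i t = p j t)
    (hnc : ∀ i j τ, i ≠ j → p i (τ - d i) ≠ p j (τ - d j)) :
    ∀ i j, G.Adj i j → d i ≠ d j := by
  intro i j hadj hd
  obtain ⟨t, ht⟩ := hshared i j hadj
  have := hnc i j (t + d i) hadj.ne
  rw [hd] at this
  simp at this
  exact this ht
end

section
/- Any path in the Constrained Graph of agent i from the start (v^i_1, 1) to the goal (v^i_{k_i}, k_i), when projected onto its first coordinate, is a d-delay of the original path π_i for some d ≥ 0 equal to the number of self-loop edges used. -/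
variable {V : Type*}

/-- Agent-specific edges of the Constrained Graph of a path `π` (0-indexed):
from `(π[j], j)` (for `j+1 < |π|`) one may advance to `(π[j+1], j+1)` or take
the self-loop back to `(π[j], j)`. -/
def CGEdge [Inhabited V] (π : List V) (a b : V × ℕ) : Prop :=
  ∃ j, j + 1 < π.length ∧ a = (π.getD j default, j) ∧
    (b = (π.getD (j + 1) default, j + 1) ∨ b = a)

/-! A path in the Constrained Graph is read off edge by edge: an advancing edge moves on to the
next vertex of `π`, a self-loop repeats the current one. Hence a path from `(π[j], j)` to the goal
projects to a delay of the suffix `π.drop j`, with one extra repetition per self-loop; the theorem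
is the case `j = 0`. -/

namespace IsDelay

theorem singleton (v : V) : IsDelay 0 [v] [v] := ⟨[0], rfl, rfl, rfl⟩

theorem cons {d : ℕ} {π π' : List V} (h : IsDelay d π π') (v : V) :
    IsDelay d (v :: π) (v :: π') := by
  obtain ⟨ks, hlen, hsum, rfl⟩ := h
  exact ⟨0 :: ks, by simp [hlen], by simp [hsum], rfl⟩

theorem cons_self {d : ℕ} {v : V} {π π' : List V} (h : IsDelay d (v :: π) π') :
    IsDelay (d + 1) (v :: π) (v :: π') := by
  obtain ⟨_ | ⟨k, ks⟩, hlen, rfl, rfl⟩ := h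
  · simp at hlen
  · exact ⟨(k + 1) :: ks, hlen, by simp [add_right_comm], rfl⟩

end IsDelay

section SelfLoopCount

variable {α : Type*} [DecidableEq α]

def selfLoopCount (ρ : List α) : ℕ :=
  ((ρ.zip ρ.tail).filter fun p => decide (p.1 = p.2)).length

theorem selfLoopCount_cons_cons_of_ne {a b : α} (ρ : List α) (hab : a ≠ b) :
    selfLoopCount (a :: b :: ρ) = selfLoopCount (b :: ρ) := by
  simp [selfLoopCount, hab]

theorem selfLoopCount_cons_self (a : α) (ρ : List α) :
    selfLoopCount (a :: a :: ρ) = selfLoopCount (a :: ρ) + 1 := by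
  simp [selfLoopCount]

end SelfLoopCount

theorem List.drop_eq_getD_cons {l : List V} {i : ℕ} (h : i < l.length) (d : V) :
    l.drop i = l.getD i d :: l.drop (i + 1) := by
  rw [List.drop_eq_getElem_cons h, List.getD_eq_getElem _ _ h]

theorem isDelay_drop_of_isChain_cgEdge [Inhabited V] [DecidableEq V] {π : List V}
    {ρ : List (V × ℕ)} {j : ℕ} (hj : j < π.length) (hchain : ρ.IsChain (CGEdge π))
    (hstart : ρ.head? = some (π.getD j default, j))
    (hend : ρ.getLast? = some (π.getD (π.length - 1) default, π.length - 1)) :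
    IsDelay (selfLoopCount ρ) (π.drop j) (ρ.map Prod.fst) := by
  induction ρ generalizing j with
  | nil => simp at hstart
  | cons a ρ ih =>
    obtain rfl : a = (π.getD j default, j) := by simpa using hstart
    rw [List.drop_eq_getD_cons hj default]
    cases ρ with
    | nil =>
      obtain rfl : j = π.length - 1 := (by simpa using hend : _ ∧ _).2
      rw [List.drop_eq_nil_of_le (by omega)]
      exact IsDelay.singleton _
    | cons b ρ =>
      obtain ⟨⟨j', hj', ha, hb⟩, hchain⟩ := List.isChain_cons_cons.mp hchain
      obtain rfl : j = j' := (by simpa using ha : _ ∧ _).2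
      rw [List.getLast?_cons_cons] at hend
      rcases hb with rfl | rfl
      · rw [selfLoopCount_cons_cons_of_ne _ (by simp)]
        exact (ih hj' hchain rfl hend).cons _
      · rw [selfLoopCount_cons_self]
        have hloop := ih hj hchain rfl hend
        rw [List.drop_eq_getD_cons hj default] at hloop
        exact hloop.cons_self

/-- Any path in the Constrained Graph of agent `i` from the start `(π[0], 0)` to
the goal `(π[k-1], k-1)`, projected to its first coordinate, is a `d`-delay of the
original path `π`, where `d` is the number of self-loop edges used. -/
theorem cg_path_is_delay [Inhabited V] [DecidableEq V] (π : List V) (hπ : π ≠ [])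
    (ρ : List (V × ℕ)) (hchain : ρ.Chain' (CGEdge π))
    (hstart : ρ.head? = some (π.getD 0 default, 0))
    (hend : ρ.getLast? = some (π.getD (π.length - 1) default, π.length - 1)) :
    IsDelay (((ρ.zip ρ.tail).filter fun p => decide (p.1 = p.2)).length)
      π (ρ.map Prod.fst) :=
  isDelay_drop_of_isChain_cgEdge (List.length_pos_iff.mpr hπ) hchain hstart hend
end

section
/- An ACID instance has a solution with budget D if and only if the corresponding Agent-Edge MAPF instance on the Constrained Graph has a non-colliding solution P' with ‖P'‖ ≤ ‖P‖ + D. -/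
variable {V : Type*}

/-! A path of the Constrained Graph of `π` from `(π[0], 0)` to the goal can only advance
`(π[j], j) → (π[j+1], j+1)` or loop in place, and never loops at the goal; so it is
`delayPath π.zipIdx ks` for some `ks`, and its projection is the delay `delayPath π ks`, of length
`|π| + Σ ks`. Conversely, a delay may also wait at the goal, but the padded positions cannot see
such waiting: dropping it yields a Constrained Graph path with the same collisions and no larger
length. -/

section DelayPath

variable {α β : Type*}

@[simp]
theorem delayPath_nil (ks : List ℕ) : delayPath ([] : List α) ks = [] := by
  simp [delayPath]

@[simp]
theorem delayPath_cons_cons (x : α) (l : List α) (k : ℕ) (ks : List ℕ) :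
    delayPath (x :: l) (k :: ks) = List.replicate (k + 1) x ++ delayPath l ks := by
  simp [delayPath]

theorem delayPath_append {l₁ l₂ : List α} {ks₁ : List ℕ} (ks₂ : List ℕ)
    (h : l₁.length = ks₁.length) :
    delayPath (l₁ ++ l₂) (ks₁ ++ ks₂) = delayPath l₁ ks₁ ++ delayPath l₂ ks₂ := by
  simp [delayPath, List.zipWith_append h]

theorem map_delayPath (f : α → β) (l : List α) (ks : List ℕ) :
    (delayPath l ks).map f = delayPath (l.map f) ks := by
  simp [delayPath, List.map_flatten, List.map_zipWith, List.zipWith_map_left]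

theorem length_delayPath {l : List α} {ks : List ℕ} (h : ks.length = l.length) :
    (delayPath l ks).length = l.length + ks.sum := by
  induction l generalizing ks with
  | nil => simp_all
  | cons x l ih =>
    obtain _ | ⟨k, ks⟩ := ks
    · simp at h
    · simp [ih (Nat.succ.inj h)]; omega

theorem head?_delayPath {l : List α} {ks : List ℕ} (h : ks.length = l.length) :
    (delayPath l ks).head? = l.head? := by
  obtain _ | ⟨x, l⟩ := l
  · simp
  · obtain _ | ⟨k, ks⟩ := ks
    · simp at h
    · simp [List.replicate_succ]

theorem getLast?_delayPath {l : List α} {ks : List ℕ} (h : ks.length = l.length) :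
    (delayPath l ks).getLast? = l.getLast? := by
  obtain rfl | ⟨l, x, rfl⟩ := l.eq_nil_or_concat'
  · simp
  obtain rfl | ⟨ks, k, rfl⟩ := ks.eq_nil_or_concat'
  · simp at h
  simp only [List.length_append, List.length_singleton, Nat.add_right_cancel_iff] at h
  rw [delayPath_append _ h.symm]
  simp [delayPath, List.getLast?_append, List.replicate_succ']

theorem List.IsChain.delayPath_append_zero {R : α → α → Prop} {w : List α}
    (hw : w.IsChain R) (hrefl : ∀ x ∈ w.dropLast, R x x) {ks : List ℕ}
    (hks : ks.length + 1 = w.length) : (delayPath w (ks ++ [0])).IsChain R := by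
  induction w generalizing ks with
  | nil => simp at hks
  | cons x w ih =>
    obtain _ | ⟨k, ks⟩ := ks
    · obtain rfl : w = [] := List.eq_nil_of_length_eq_zero (by simpa using hks.symm)
      simp [delayPath]
    obtain _ | ⟨y, w⟩ := w
    · simp at hks
    rw [List.cons_append, delayPath_cons_cons]
    refine .append (List.isChain_replicate_of_rel _ (hrefl x (by simp)))
      (ih hw.tail (fun z hz => hrefl z (by simp_all)) (by simpa using hks)) ?_
    intro a ha b hb
    rw [head?_delayPath (by simpa using hks)] at hb
    simp [List.getLast?_replicate] at ha hb
    rw [← ha, ← hb]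
    exact hw.rel

end DelayPath

section PadPos

variable [Inhabited V]

theorem padPos_append_singleton_of_getLast? {l : List V} {v : V} (h : l.getLast? = some v) :
    padPos (l ++ [v]) = padPos l := by
  obtain rfl | ⟨l, x, rfl⟩ := l.eq_nil_or_concat'
  · simp at h
  obtain rfl : x = v := by simpa using h
  funext t
  simp only [padPos, List.getD_eq_getElem?_getD, List.getElem?_append, List.length_append,
    List.length_singleton]
  grind

theorem padPos_append_replicate_of_getLast? {l : List V} {v : V}
    (h : l.getLast? = some v) (k : ℕ) : padPos (l ++ List.replicate k v) = padPos l := by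
  induction k with
  | zero => simp
  | succ k ih =>
    rw [List.replicate_succ', ← List.append_assoc, padPos_append_singleton_of_getLast?, ih]
    cases k <;> simp [List.getLast?_append, h, List.replicate_succ']

theorem padPos_delayPath_append_singleton {l : List V} {ks : List ℕ}
    (h : ks.length = l.length) (x : V) (k : ℕ) :
    padPos (delayPath (l ++ [x]) (ks ++ [k])) = padPos (delayPath (l ++ [x]) (ks ++ [0])) := by
  simp only [delayPath_append _ h.symm, delayPath_cons_cons, delayPath_nil, List.append_nil]
  rw [Nat.add_comm k, List.replicate_add, ← List.append_assoc,
    padPos_append_replicate_of_getLast? (by simp)]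

end PadPos

section ConstrainedGraph

variable [Inhabited V]

def IsCGPath (π : List V) (ρ : List (V × ℕ)) : Prop :=
  ρ.IsChain (CGEdge π) ∧ ρ.head? = some (π.getD 0 default, 0) ∧
    ρ.getLast? = some (π.getD (π.length - 1) default, π.length - 1)

variable {π : List V}

theorem cgEdge_zipIdx_succ {j : ℕ} (hj : j + 1 < π.length) :
    CGEdge π (π.zipIdx[j]'(by simp; omega)) (π.zipIdx[j + 1]'(by simpa)) :=
  ⟨j, hj, by rw [List.getD_eq_getElem _ _ (by omega)]; simp,
    Or.inl (by rw [List.getD_eq_getElem _ _ hj]; simp)⟩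

theorem cgEdge_zipIdx_self {j : ℕ} (hj : j + 1 < π.length) :
    CGEdge π (π.zipIdx[j]'(by simp; omega)) (π.zipIdx[j]'(by simp; omega)) :=
  ⟨j, hj, by rw [List.getD_eq_getElem _ _ (by omega)]; simp, Or.inr rfl⟩

theorem isCGPath_delayPath_zipIdx {ks : List ℕ} (hks : ks.length + 1 = π.length) :
    IsCGPath π (delayPath π.zipIdx (ks ++ [0])) := by
  have hlen : (ks ++ [0]).length = π.zipIdx.length := by simpa
  refine ⟨.delayPath_append_zero ?_ ?_ (by simpa), ?_, ?_⟩
  · exact List.isChain_iff_getElem.2 fun j hj => cgEdge_zipIdx_succ (by simpa using hj)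
  · intro x hx
    obtain ⟨j, hj, rfl⟩ := List.mem_iff_getElem.1 hx
    rw [List.getElem_dropLast]
    exact cgEdge_zipIdx_self (by simp at hj; omega)
  · rw [head?_delayPath hlen]
    obtain _ | ⟨x, π⟩ := π
    · simp at hks
    · simp
  · rw [getLast?_delayPath hlen]
    obtain rfl | ⟨π, x, rfl⟩ := π.eq_nil_or_concat'
    · simp at hks
    · simp

theorem exists_isCGPath_of_isDelay {π' : List V} {d : ℕ} (hπ : π ≠ [])
    (h : IsDelay d π π') :
    ∃ ρ, IsCGPath π ρ ∧ ρ.length ≤ π.length + d ∧ padPos (ρ.map Prod.fst) = padPos π' := by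
  obtain ⟨ks, hlen, rfl, rfl⟩ := h
  obtain rfl | ⟨l, x, rfl⟩ := π.eq_nil_or_concat'
  · exact absurd rfl hπ
  obtain rfl | ⟨ks, k, rfl⟩ := ks.eq_nil_or_concat'
  · simp at hlen
  simp only [List.length_append, List.length_singleton, Nat.add_right_cancel_iff] at hlen
  refine ⟨delayPath (l ++ [x]).zipIdx (ks ++ [0]), isCGPath_delayPath_zipIdx (by simp [hlen]),
    ?_, ?_⟩
  · rw [length_delayPath (by simp [hlen])]
    simp
  · rw [map_delayPath, List.zipIdx_map_fst, (padPos_delayPath_append_singleton hlen _ _).symm]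

theorem exists_map_fst_eq_delayPath_drop {ρ : List (V × ℕ)} {j : ℕ} (hj : j < π.length)
    (hρ : ρ.IsChain (CGEdge π)) (hhead : ρ.head? = some (π.getD j default, j))
    (hlast : ρ.getLast? = some (π.getD (π.length - 1) default, π.length - 1)) :
    ∃ ks : List ℕ, ks.length = π.length - j ∧ ρ.map Prod.fst = delayPath (π.drop j) ks := by
  induction ρ generalizing j with
  | nil => simp at hhead
  | cons a ρ ih =>
    obtain rfl : a = (π.getD j default, j) := by simpa using hhead
    rw [List.drop_eq_getElem_cons hj, ← List.getD_eq_getElem _ default hj]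
    obtain _ | ⟨b, ρ⟩ := ρ
    · obtain rfl : j = π.length - 1 := by simpa using congrArg Prod.snd (Option.some.inj hlast)
      refine ⟨[0], by simp; omega, ?_⟩
      simp [List.drop_eq_nil_of_le (by omega : π.length ≤ π.length - 1 + 1)]
    obtain ⟨⟨j', hj', ha, hb⟩, hρ⟩ := List.isChain_cons_cons.1 hρ
    obtain rfl : j = j' := congrArg Prod.snd ha
    rw [List.getLast?_cons_cons] at hlast
    rcases hb with rfl | rfl
    · obtain ⟨ks, hlen, hks⟩ := ih (j := j + 1) (by omega) hρ rfl hlast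
      exact ⟨0 :: ks, by simp; omega, by rw [List.map_cons, hks]; simp⟩
    · obtain ⟨_ | ⟨k, ks⟩, hlen, hks⟩ := ih hj hρ (by rw [ha]; rfl) hlast
      · simp at hlen; omega
      refine ⟨(k + 1) :: ks, by simpa using hlen, ?_⟩
      rw [List.map_cons, hks, List.drop_eq_getElem_cons hj, ← List.getD_eq_getElem _ default hj]
      simp [List.replicate_succ]

theorem exists_isDelay_of_isCGPath {ρ : List (V × ℕ)} (hπ : π ≠ []) (h : IsCGPath π ρ) :
    ∃ d, IsDelay d π (ρ.map Prod.fst) ∧ ρ.length = π.length + d := by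
  obtain ⟨ks, hlen, hks⟩ :=
    exists_map_fst_eq_delayPath_drop (List.length_pos_iff.2 hπ) h.1 h.2.1 h.2.2
  rw [Nat.sub_zero, List.drop_zero] at *
  refine ⟨ks.sum, ⟨ks, hlen, rfl, hks⟩, ?_⟩
  rw [← List.length_map Prod.fst, hks, length_delayPath hlen]

end ConstrainedGraph

/-- An ACID instance has a solution with budget `D` iff the Agent-Edge MAPF
instance on the Constrained Graph has a non-colliding solution `P'` (collisions
checked on the projections to the underlying vertices) with `‖P'‖ ≤ ‖P‖ + D`. -/
theorem acid_iff_cg_mapf [Inhabited V] {n : ℕ} (P : Fin n → List V)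
    (hP : ∀ i, P i ≠ []) (D : ℕ) :
    (∃ (d : Fin n → ℕ) (P' : Fin n → List V),
        (∀ i, IsDelay (d i) (P i) (P' i)) ∧ (∑ i, d i) ≤ D ∧
        ∀ i j, i ≠ j → NonColliding (P' i) (P' j)) ↔
    (∃ ρ : Fin n → List (V × ℕ),
        (∀ i, (ρ i).Chain' (CGEdge (P i)) ∧
          (ρ i).head? = some ((P i).getD 0 default, 0) ∧
          (ρ i).getLast? =
            some ((P i).getD ((P i).length - 1) default, (P i).length - 1)) ∧
        (∑ i, (ρ i).length) ≤ (∑ i, (P i).length) + D ∧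
        ∀ i j, i ≠ j →
          NonColliding ((ρ i).map Prod.fst) ((ρ j).map Prod.fst)) := by
  constructor
  · rintro ⟨d, P', hdelay, hD, hP'⟩
    choose ρ hρ hlen hpos using fun i => exists_isCGPath_of_isDelay (hP i) (hdelay i)
    refine ⟨ρ, hρ, ?_, fun i j hij => ?_⟩
    · calc ∑ i, (ρ i).length ≤ ∑ i, ((P i).length + d i) := Finset.sum_le_sum fun i _ => hlen i
        _ ≤ (∑ i, (P i).length) + D := by rw [Finset.sum_add_distrib]; gcongr
    · unfold NonColliding
      rw [hpos i, hpos j]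
      exact hP' i j hij
  · rintro ⟨ρ, hρ, hsum, hρ'⟩
    choose d hd hlen using fun i => exists_isDelay_of_isCGPath (hP i) (hρ i)
    refine ⟨d, fun i => (ρ i).map Prod.fst, hd, ?_, hρ'⟩
    simp only [hlen, Finset.sum_add_distrib] at hsum
    omega
end

section
/- If a plan P with n agents is obtained from a non-colliding plan Q by delaying one designated agent by d extra steps (an unexpected delay), then delaying every other agent by d steps at its current position yields a non-colliding plan; hence P can be repaired with at most d·(n-1) introduced delays. -/
variable {V : Type*}

/-- Insert a `d`-step pause at time `t`: the (padded) vertex occupied at time `t`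
is repeated `d` additional times. -/
def pauseAt [Inhabited V] (π : List V) (t d : ℕ) : List V :=
  π.take (t + 1) ++ List.replicate d (padPos π t) ++ π.drop (t + 1)


private lemma getD_concat3 [Inhabited V] (π : List V) (m d j : ℕ) (hm : m < π.length) :
    (π.take (m+1) ++ List.replicate d (π.getD m default) ++ π.drop (m+1)).getD j default
      = π.getD (max (min j m) (j - d)) default := by
  have hlt : (π.take (m+1)).length = m + 1 := by
    simp [List.length_take]; omega
  rw [List.append_assoc]
  by_cases h1 : j < m + 1
  · rw [List.getD_append _ _ _ _ (by omega)]
    have hj : max (min j m) (j - d) = j := by omega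
    rw [hj]
    simp [List.getD_eq_getElem?_getD, List.getElem?_take, h1]
  · rw [List.getD_append_right _ _ _ _ (by omega), hlt]
    by_cases h2 : j - (m + 1) < d
    · rw [List.getD_append _ _ _ _ (by simpa using h2)]
      have hj : max (min j m) (j - d) = m := by omega
      rw [hj]
      simp [List.getD_eq_getElem?_getD, List.getElem?_replicate, h2]
    · rw [List.getD_append_right _ _ _ _ (by simpa using h2)]
      simp only [List.length_replicate]
      have : (π.drop (m+1)).getD (j - (m+1) - d) default
          = π.getD ((m+1) + (j - (m+1) - d)) default := by
        simp [List.getD_eq_getElem?_getD, List.getElem?_drop]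
      rw [this]
      congr 1
      omega

private lemma pause_eq [Inhabited V] (π : List V) (hπ : π ≠ []) (t d : ℕ) :
    pauseAt π t d = π.take (min t (π.length - 1) + 1) ++
      List.replicate d (π.getD (min t (π.length - 1)) default) ++
      π.drop (min t (π.length - 1) + 1) := by
  have hL : 0 < π.length := List.length_pos_iff.2 hπ
  unfold pauseAt padPos
  by_cases ht : t < π.length
  · have : min t (π.length - 1) = t := by omega
    rw [this]
  · have hm : min t (π.length - 1) = π.length - 1 := by omega
    rw [hm, List.take_of_length_le (by omega), List.take_of_length_le (by omega),
      List.drop_eq_nil_of_le (by omega), List.drop_eq_nil_of_le (by omega)]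

private lemma length_pause [Inhabited V] (π : List V) (hπ : π ≠ []) (t d : ℕ) :
    (pauseAt π t d).length = π.length + d := by
  have hL : 0 < π.length := List.length_pos_iff.2 hπ
  rw [pause_eq π hπ]
  simp [List.length_take, List.length_drop]
  omega

private lemma padPos_pause [Inhabited V] (π : List V) (hπ : π ≠ []) (t d s : ℕ) :
    padPos (pauseAt π t d) s = padPos π (max (min s t) (s - d)) := by
  have hL : 0 < π.length := List.length_pos_iff.2 hπ
  have hm : min t (π.length - 1) < π.length := by omega
  rw [padPos, length_pause π hπ, pause_eq π hπ, getD_concat3 _ _ _ _ hm, padPos]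
  congr 1
  omega

private lemma delayPath_zeros (π : List V) :
    delayPath π (List.replicate π.length 0) = π := by
  induction π with
  | nil => rfl
  | cons v π ih =>
    simp only [List.length_cons, List.replicate_succ, delayPath, List.zipWith_cons_cons,
      List.flatten_cons, Nat.zero_add, List.replicate_one, List.singleton_append,
      List.replicate_zero, List.nil_append] at *
    rw [ih]

private lemma sum_set_zeros (d : ℕ) : ∀ (L m : ℕ), m < L →
    ((List.replicate L 0).set m d).sum = d
  | L+1, 0, _ => by simp [List.replicate_succ]
  | L+1, m+1, h => by
    simp [List.replicate_succ, sum_set_zeros d L m (by omega)]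

private lemma delayPath_set [Inhabited V] (d : ℕ) : ∀ (π : List V) (m : ℕ), m < π.length →
    delayPath π ((List.replicate π.length 0).set m d) =
      π.take (m+1) ++ List.replicate d (π.getD m default) ++ π.drop (m+1)
  | [], m, h => by simp at h
  | v :: π, 0, _ => by
    simp only [List.length_cons, List.replicate_succ, List.set_cons_zero, delayPath,
      List.zipWith_cons_cons, List.flatten_cons]
    have : delayPath π (List.replicate π.length 0) = π := delayPath_zeros π
    rw [delayPath] at this
    simp only [List.replicate_succ] at this
    rw [this]
    simp [List.replicate_succ]
  | v :: π, m+1, h => by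
    simp only [List.length_cons, List.replicate_succ, List.set_cons_succ, delayPath,
      List.zipWith_cons_cons, List.flatten_cons]
    have := delayPath_set d π m (by simpa using h)
    rw [delayPath] at this
    simp only [List.replicate_succ] at this
    rw [this]
    simp [List.replicate_succ]
/-- If a plan `P` is obtained from a non-colliding plan `Q` by delaying one
designated agent `i` by `d` steps at a single position (time `t`), then pausing
every agent for `d` steps at time `t` resynchronizes the plan: the result is
non-colliding, each path is a `d`-delay of the corresponding path of `Q`, and the
number of delays introduced into `P` (one pause of length `d` for each of the
other `n - 1` agents) is `d * (n - 1)`. -/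
theorem resynchronize_repair [Inhabited V] {n : ℕ} (Q : Fin n → List V)
    (hne : ∀ a, Q a ≠ []) (i : Fin n) (t d : ℕ)
    (P : Fin n → List V)
    (hPi : P i = pauseAt (Q i) t d) (hPj : ∀ a, a ≠ i → P a = Q a)
    (hnc : ∀ a b, a ≠ b → NonColliding (Q a) (Q b)) :
    (∀ a b, a ≠ b → NonColliding (pauseAt (Q a) t d) (pauseAt (Q b) t d)) ∧
    (∀ a, IsDelay d (Q a) (pauseAt (Q a) t d)) ∧
    (∑ _a ∈ Finset.univ.erase i, d) = d * (n - 1) := by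
  refine ⟨?_, ?_, ?_⟩
  · intro a b hab
    obtain ⟨h1, h2⟩ := hnc a b hab
    constructor
    · intro s
      rw [padPos_pause _ (hne a), padPos_pause _ (hne b)]
      exact h1 _
    · intro s
      rw [padPos_pause _ (hne a), padPos_pause _ (hne a), padPos_pause _ (hne b),
        padPos_pause _ (hne b)]
      rcases (show max (min (s+1) t) (s+1-d) = max (min s t) (s-d) ∨
          max (min (s+1) t) (s+1-d) = max (min s t) (s-d) + 1 by omega) with he | he
      · rw [he]
        intro hcon
        exact h1 _ (congrArg Prod.fst hcon)
      · rw [he]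
        exact h2 _
  · intro a
    have hL : 0 < (Q a).length := List.length_pos_iff.2 (hne a)
    refine ⟨(List.replicate (Q a).length 0).set (min t ((Q a).length - 1)) d, by simp,
      sum_set_zeros d _ _ (by omega), ?_⟩
    rw [pause_eq _ (hne a), delayPath_set d _ _ (by omega)]
  · rw [Finset.sum_const, Finset.card_erase_of_mem (Finset.mem_univ i), Finset.card_univ,
      Fintype.card_fin, smul_eq_mul, mul_comm]
end
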